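/- Let ξ : ℕ → ℕ be the Collatz map, ξₙ its n-fold iterate, and for each n let ν⁽ⁿ⁾(ε₀) and ν⁽ⁿ⁾(ε₁) denote respectively the asymptotic densities of {k ∈ ℕ : ξₙ(k) even} and {k ∈ ℕ : ξₙ(k) odd}. Then lim_{n→∞} ν⁽ⁿ⁾(ε₀) = 2/3 and lim_{n→∞} ν⁽ⁿ⁾(ε₁) = 1/3. -/

import Mathlib

open Filter Topology

/-- The Collatz map. -/
def collatz (n : ℕ) : ℕ := if n % 2 = 0 then n / 2 else 3 * n + 1

open Finset Function

/-!
Split `k = 2s` or `k = 2s + 1`: then `collatz^[n+2] (2s) = collatz^[n+1] s` and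
`collatz^[n+2] (2s+1) = collatz^[n] (3s+2)`. The parity of `collatz^[n]` is periodic with period
`2^(n+1)`, and `s ↦ 3s + 2` permutes the residues modulo `2^(n+1)`, so the number `O n` of odd
values of `collatz^[n]` on one period satisfies `O (n+2) = O (n+1) + 2 O n`, that is,
`3 O n = 2^(n+1) + (-1)^n`. The density of a periodic set is its frequency on one period, so
`ν⁽ⁿ⁾(ε₁) = O n / 2^(n+1) = 1/3 + (-1)^n / (3·2^(n+1))`.
-/

namespace Nat

variable {p : ℕ → Prop} [DecidablePred p]

theorem count_two_mul (N : ℕ) :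
    count p (2 * N) = count (fun s ↦ p (2 * s)) N + count (fun s ↦ p (2 * s + 1)) N := by
  induction N with
  | zero => rfl
  | succ N ih =>
    rw [show 2 * (N + 1) = 2 * N + 1 + 1 by ring, count_succ, count_succ, ih, count_succ,
      count_succ]
    ring

theorem count_mod_two_eq_zero_add_count_mod_two_eq_one (f : ℕ → ℕ) (n : ℕ) :
    count (fun k ↦ f k % 2 = 0) n + count (fun k ↦ f k % 2 = 1) n = n := by
  induction n with
  | zero => rfl
  | succ n ih => simp only [count_succ]; split_ifs <;> omega

end Nat

namespace Function.Periodic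

theorem comp_affine {α : Type*} {f : ℕ → α} {P : ℕ} (hf : Periodic f P) (a b : ℕ) :
    Periodic (fun s ↦ f (a * s + b)) P := fun s ↦ by
  simpa only [mul_add, add_right_comm, mul_comm a P, Nat.cast_id] using hf.nat_mul a (a * s + b)

variable {p : ℕ → Prop} [DecidablePred p] {P : ℕ}

theorem count_comp_nat_mul_add (hp : Periodic p P) (q n : ℕ) :
    Nat.count (fun k ↦ p (q * P + k)) n = Nat.count p n := by
  have hshift : (fun k ↦ p (q * P + k)) = p := funext fun k ↦ by
    rw [add_comm]; exact hp.nat_mul q k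
  simp only [hshift]

theorem count_nat_mul (hp : Periodic p P) (q : ℕ) : Nat.count p (q * P) = q * Nat.count p P := by
  induction q with
  | zero => simp
  | succ q ih =>
    rw [add_mul, one_mul, Nat.count_add, hp.count_comp_nat_mul_add, ih, add_mul, one_mul]

theorem count_nat_mul_add (hp : Periodic p P) (q r : ℕ) :
    Nat.count p (q * P + r) = q * Nat.count p P + Nat.count p r := by
  rw [Nat.count_add, hp.count_comp_nat_mul_add, hp.count_nat_mul]

theorem count_comp_affine (hp : Periodic p P) {a : ℕ} (ha : a.Coprime P) (b : ℕ) :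
    Nat.count (fun s ↦ p (a * s + b)) P = Nat.count p P := by
  rcases P.eq_zero_or_pos with rfl | hP
  · rfl
  set f : ℕ → ℕ := fun s ↦ (a * s + b) % P
  have hinj : Set.InjOn f (range P) := fun s hs t ht hst ↦ by
    have : a * s ≡ a * t [MOD P] := Nat.ModEq.add_right_cancel' b hst
    simpa [Nat.ModEq, Nat.mod_eq_of_lt (mem_range.mp hs), Nat.mod_eq_of_lt (mem_range.mp ht)]
      using this.cancel_left_of_coprime (Nat.coprime_comm.mp ha)
  have himage : (range P).image f = range P :=
    eq_of_subset_of_card_le (fun _ h ↦ by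
      obtain ⟨s, -, rfl⟩ := mem_image.mp h; exact mem_range.mpr (Nat.mod_lt _ hP))
      (card_image_of_injOn hinj).ge
  rw [Nat.count_eq_card_filter_range, Nat.count_eq_card_filter_range]
  conv_rhs => rw [← himage, filter_image, card_image_of_injOn (hinj.mono (filter_subset _ _))]
  simp only [f, hp.map_mod_nat]

theorem count_comp_add_one (hp : Periodic p P) :
    Nat.count (fun k ↦ p (k + 1)) P = Nat.count p P := by
  have h := Nat.count_succ' p P
  have h0 : p P ↔ p 0 := by simpa using hp 0
  simp only [Nat.count_succ, h0] at h
  omega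

theorem tendsto_count_div (hp : Periodic p P) (hP : 0 < P) :
    Tendsto (fun m : ℕ ↦ (Nat.count p m : ℝ) / m) atTop (𝓝 (Nat.count p P / P)) := by
  have hbound : ∀ m, 0 < m → |(Nat.count p m : ℝ) / m - Nat.count p P / P| ≤ P / m := by
    intro m hm
    obtain ⟨q, r, hr, rfl⟩ : ∃ q r, r < P ∧ m = q * P + r :=
      ⟨m / P, m % P, Nat.mod_lt m hP, (Nat.div_add_mod' m P).symm⟩
    have hc : (Nat.count p r : ℝ) ≤ r := by exact_mod_cast Nat.count_le _
    have hA : (Nat.count p P : ℝ) ≤ P := by exact_mod_cast Nat.count_le _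
    have hr' : (r : ℝ) < P := by exact_mod_cast hr
    have hm' : (0 : ℝ) < (q * P + r : ℕ) := by exact_mod_cast hm
    have hdiff : (Nat.count p (q * P + r) : ℝ) / (q * P + r : ℕ) - Nat.count p P / P
        = (Nat.count p r * P - r * Nat.count p P) / ((q * P + r : ℕ) * P) := by
      rw [count_nat_mul_add hp]
      field_simp
      push_cast
      ring
    have hP' : (0 : ℝ) < P := by exact_mod_cast hP
    rw [hdiff, abs_div, abs_of_pos (mul_pos hm' hP')]
    calc _ ≤ ((P : ℝ) * P) / ((q * P + r : ℕ) * P) := by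
          gcongr
          rw [abs_le]
          constructor <;> nlinarith [(Nat.count p r).cast_nonneg (α := ℝ),
            (Nat.count p P).cast_nonneg (α := ℝ)]
      _ = P / (q * P + r : ℕ) := by field_simp
  rw [← tendsto_sub_nhds_zero_iff]
  refine squeeze_zero_norm' ?_ (tendsto_const_div_atTop_nhds_zero_nat (P : ℝ))
  filter_upwards [eventually_gt_atTop 0] with m hm
  exact hbound m hm

theorem tendsto_card_filter_Icc_div (hp : Periodic p P) (hP : 0 < P) :
    Tendsto (fun m : ℕ ↦ (#{k ∈ Icc 1 m | p k} : ℝ) / m) atTop (𝓝 (Nat.count p P / P)) := by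
  have hcard (m : ℕ) : #{k ∈ Icc 1 m | p k} = Nat.count (fun k ↦ p (k + 1)) m := by
    rw [Nat.count_eq_card_filter_range, ← Ico_add_one_right_eq_Icc, range_eq_Ico,
      ← zero_add 1, ← map_add_right_Ico, filter_map, card_map]
    rfl
  simpa only [hcard, hp.count_comp_add_one] using (hp.add_const 1).tendsto_count_div hP

end Function.Periodic

theorem collatz_two_mul (s : ℕ) : collatz (2 * s) = s := by simp [collatz]

theorem collatz_collatz_two_mul_add_one (s : ℕ) : collatz (collatz (2 * s + 1)) = 3 * s + 2 := by
  have hodd : collatz (2 * s + 1) = 6 * s + 4 := by rw [collatz, if_neg (by omega)]; ring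
  rw [hodd, collatz, if_pos (by omega)]
  omega

theorem collatz_iterate_succ_two_mul (n s : ℕ) : collatz^[n + 1] (2 * s) = collatz^[n] s := by
  rw [iterate_succ_apply, collatz_two_mul]

theorem collatz_iterate_add_two_two_mul_add_one (n s : ℕ) :
    collatz^[n + 2] (2 * s + 1) = collatz^[n] (3 * s + 2) := by
  rw [iterate_succ_apply, iterate_succ_apply, collatz_collatz_two_mul_add_one]

theorem periodic_collatz_iterate_mod_two :
    ∀ n, Periodic (fun k ↦ collatz^[n] k % 2) (2 ^ (n + 1))
  | 0 => fun k ↦ by simp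
  | 1 => fun k ↦ by simp only [iterate_one, collatz]; split_ifs <;> omega
  | n + 2 => fun k ↦ by
    obtain ⟨s, rfl | rfl⟩ := Nat.even_or_odd' k
    · rw [show 2 * s + 2 ^ (n + 2 + 1) = 2 * (s + 2 ^ (n + 1 + 1)) by ring]
      simpa only [collatz_iterate_succ_two_mul] using periodic_collatz_iterate_mod_two (n + 1) s
    · rw [show 2 * s + 1 + 2 ^ (n + 2 + 1) = 2 * (s + 2 ^ (n + 2)) + 1 by ring]
      simp only [collatz_iterate_add_two_two_mul_add_one]
      rw [show 3 * (s + 2 ^ (n + 2)) + 2 = 3 * s + 2 + 6 * 2 ^ (n + 1) by ring]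
      simpa using (periodic_collatz_iterate_mod_two n).nat_mul 6 (3 * s + 2)

theorem periodic_collatz_iterate_mod_two_eq (n i : ℕ) :
    Periodic (fun k ↦ collatz^[n] k % 2 = i) (2 ^ (n + 1)) :=
  (periodic_collatz_iterate_mod_two n).comp (· = i)

def collatzOddCount (n : ℕ) : ℕ := Nat.count (fun k ↦ collatz^[n] k % 2 = 1) (2 ^ (n + 1))

theorem collatzOddCount_add_two (n : ℕ) :
    collatzOddCount (n + 2) = collatzOddCount (n + 1) + 2 * collatzOddCount n := by
  have hper := periodic_collatz_iterate_mod_two_eq n 1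
  have hcop : Nat.Coprime 3 (2 ^ (n + 1)) := Nat.Coprime.pow_right _ (by norm_num)
  simp only [collatzOddCount]
  rw [pow_succ' 2 (n + 2), Nat.count_two_mul]
  simp only [collatz_iterate_succ_two_mul, collatz_iterate_add_two_two_mul_add_one]
  rw [pow_succ' 2 (n + 1), (hper.comp_affine 3 2).count_nat_mul, hper.count_comp_affine hcop]

theorem three_mul_collatzOddCount : ∀ n,
    3 * (collatzOddCount n : ℤ) = 2 ^ (n + 1) + (-1) ^ n
  | 0 => by decide
  | 1 => by decide
  | n + 2 => by
    rw [collatzOddCount_add_two]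
    push_cast
    linear_combination three_mul_collatzOddCount (n + 1) + 2 * three_mul_collatzOddCount n

theorem collatzOddCount_div_two_pow (n : ℕ) :
    (collatzOddCount n : ℝ) / 2 ^ (n + 1) = 1 / 3 + (-1) ^ n / (3 * 2 ^ (n + 1)) := by
  have h : (3 * collatzOddCount n : ℝ) = 2 ^ (n + 1) + (-1) ^ n := by
    exact_mod_cast three_mul_collatzOddCount n
  rw [div_add_div _ _ (by norm_num) (by positivity), div_eq_div_iff (by positivity) (by positivity)]
  linear_combination (3 * 2 ^ (n + 1) : ℝ) * h

theorem tendsto_card_filter_collatz_iterate_odd_div (n : ℕ) :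
    Tendsto (fun m : ℕ ↦ (#{k ∈ Icc 1 m | collatz^[n] k % 2 = 1} : ℝ) / m) atTop
      (𝓝 (1 / 3 + (-1) ^ n / (3 * 2 ^ (n + 1)))) := by
  convert (periodic_collatz_iterate_mod_two_eq n 1).tendsto_card_filter_Icc_div
    (by positivity) using 2
  rw [← collatzOddCount_div_two_pow, collatzOddCount, Nat.cast_pow, Nat.cast_ofNat]

theorem tendsto_card_filter_collatz_iterate_even_div (n : ℕ) :
    Tendsto (fun m : ℕ ↦ (#{k ∈ Icc 1 m | collatz^[n] k % 2 = 0} : ℝ) / m) atTop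
      (𝓝 (2 / 3 - (-1) ^ n / (3 * 2 ^ (n + 1)))) := by
  convert (periodic_collatz_iterate_mod_two_eq n 0).tendsto_card_filter_Icc_div
    (by positivity) using 2
  have hsum : (Nat.count (fun k ↦ collatz^[n] k % 2 = 0) (2 ^ (n + 1)) : ℝ)
      = 2 ^ (n + 1) - collatzOddCount n := by
    rw [eq_sub_iff_add_eq]
    exact_mod_cast Nat.count_mod_two_eq_zero_add_count_mod_two_eq_one (collatz^[n]) (2 ^ (n + 1))
  rw [hsum, Nat.cast_pow, Nat.cast_ofNat, sub_div, div_self (by positivity),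
    collatzOddCount_div_two_pow]
  ring

theorem tendsto_neg_one_pow_div_three_mul_two_pow :
    Tendsto (fun n : ℕ ↦ (-1 : ℝ) ^ n / (3 * 2 ^ (n + 1))) atTop (𝓝 0) := by
  have h :=
    (tendsto_pow_atTop_nhds_zero_of_abs_lt_one (r := (-1 / 2 : ℝ)) (by norm_num)).div_const 6
  rw [zero_div] at h
  refine h.congr fun n ↦ ?_
  rw [div_pow, pow_succ]
  ring

theorem collatz_parity_density_limit (ν₀ ν₁ : ℕ → ℝ)
    (h₀ : ∀ n : ℕ, Tendsto (fun m : ℕ =>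
        (((Finset.Icc 1 m).filter (fun k => collatz^[n] k % 2 = 0)).card : ℝ) / m)
      atTop (nhds (ν₀ n)))
    (h₁ : ∀ n : ℕ, Tendsto (fun m : ℕ =>
        (((Finset.Icc 1 m).filter (fun k => collatz^[n] k % 2 = 1)).card : ℝ) / m)
      atTop (nhds (ν₁ n))) :
    Tendsto ν₀ atTop (nhds (2/3)) ∧ Tendsto ν₁ atTop (nhds (1/3)) := by
  have hν₀ (n : ℕ) : ν₀ n = 2 / 3 - (-1) ^ n / (3 * 2 ^ (n + 1)) :=
    tendsto_nhds_unique (h₀ n) (tendsto_card_filter_collatz_iterate_even_div n)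
  have hν₁ (n : ℕ) : ν₁ n = 1 / 3 + (-1) ^ n / (3 * 2 ^ (n + 1)) :=
    tendsto_nhds_unique (h₁ n) (tendsto_card_filter_collatz_iterate_odd_div n)
  have hlim := tendsto_neg_one_pow_div_three_mul_two_pow
  constructor
  · simpa [funext hν₀] using (tendsto_const_nhds (x := (2 / 3 : ℝ))).sub hlim
  · simpa [funext hν₁] using (tendsto_const_nhds (x := (1 / 3 : ℝ))).add hlim
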